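/- arXiv:2311.09503 — 3 statements merged into one kernel-verified Lean document; each statement's English description precedes it below -/
import Mathlib

section
/- Let p be a prime and m ≥ 1. The map φ : (ℤ/pᵐℤ)³ → ker(SL₂(ℤ/p^{m+1}ℤ) → SL₂(ℤ/pℤ)) defined by φ(a,b,c) = I + p·[[a,b],[c,d]], where d = (1+pa)⁻¹(pbc − a) computed in ℤ/pᵐℤ, is a bijection. In particular, the kernel of the reduction map SL₂(ℤ/p^{m+1}ℤ) → SL₂(ℤ/pℤ) has exactly p^{3m} elements. -/
/-!
Multiplication by `p` identifies `ℤ/pᵐ` with the ideal `pℤ/p^{m+1}` (`pLift`), so a matrix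
over `ℤ/p^{m+1}` reduces to `I` mod `p` exactly when it is `I + pN` for a unique `N` over
`ℤ/pᵐ`. Since `(px)(py) = p·(pxy)`, the determinant is `det (I + pN) = 1 + p(tr N + p det N)`, so
`det = 1` becomes `a + d + p(ad - bc) = 0`. As `p` is nilpotent in `ℤ/pᵐ`, `1 + pa` is a unit
and this equation has the unique solution `d = (1 + pa)⁻¹(pbc - a)`.
-/

open Matrix

def pLift (p m : ℕ) (x : ZMod (p ^ m)) : ZMod (p ^ (m + 1)) :=
  p * ZMod.cast x

section

variable (p : ℕ) {m : ℕ}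

theorem natCast_mul_eq_zero_of_cast_eq_zero {X : ZMod (p ^ (m + 1))}
    (hX : (ZMod.cast X : ZMod (p ^ m)) = 0) : (p : ZMod (p ^ (m + 1))) * X = 0 := by
  rw [← ZMod.intCast_cast X, ZMod.intCast_zmod_eq_zero_iff_dvd] at hX
  obtain ⟨k, hk⟩ := hX
  rw [← ZMod.intCast_zmod_cast X, hk]
  push_cast
  rw [← mul_assoc, ← pow_succ', ← Nat.cast_pow, ZMod.natCast_self, zero_mul]

variable [NeZero p]

theorem cast_cast_pow_succ (x : ZMod (p ^ m)) :
    (ZMod.cast (ZMod.cast x : ZMod (p ^ (m + 1))) : ZMod (p ^ m)) = x :=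
  ZMod.cast_cast_zmod_of_le (Nat.pow_le_pow_right (NeZero.pos p) m.le_succ) x

theorem natCast_mul_eq_pLift (X : ZMod (p ^ (m + 1))) :
    (p : ZMod (p ^ (m + 1))) * X = pLift p m (ZMod.cast X) := by
  have hcast : (ZMod.cast (X - ZMod.cast (ZMod.cast X : ZMod (p ^ m))) : ZMod (p ^ m)) = 0 := by
    rw [ZMod.cast_sub (pow_dvd_pow p m.le_succ), cast_cast_pow_succ, sub_self]
  rw [pLift, ← sub_eq_zero, ← mul_sub]
  exact natCast_mul_eq_zero_of_cast_eq_zero p hcast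

theorem pLift_add (x y : ZMod (p ^ m)) : pLift p m (x + y) = pLift p m x + pLift p m y := by
  unfold pLift
  conv_rhs => rw [← mul_add, natCast_mul_eq_pLift]
  rw [ZMod.cast_add (pow_dvd_pow p m.le_succ), cast_cast_pow_succ, cast_cast_pow_succ, pLift]

theorem pLift_sub (x y : ZMod (p ^ m)) : pLift p m (x - y) = pLift p m x - pLift p m y :=
  eq_sub_of_add_eq (by rw [← pLift_add, sub_add_cancel])

theorem pLift_mul_pLift (x y : ZMod (p ^ m)) :
    pLift p m x * pLift p m y = pLift p m (p * (x * y)) := by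
  unfold pLift
  conv_lhs => rw [mul_assoc, natCast_mul_eq_pLift]
  rw [ZMod.cast_mul (pow_dvd_pow p m.le_succ), ZMod.cast_mul (pow_dvd_pow p m.le_succ),
    ZMod.cast_natCast (pow_dvd_pow p m.le_succ), cast_cast_pow_succ, cast_cast_pow_succ,
    mul_left_comm x, pLift]

theorem pLift_eq_zero_iff {x : ZMod (p ^ m)} : pLift p m x = 0 ↔ x = 0 := by
  refine ⟨fun hx => ?_, fun hx => by rw [hx, pLift, ZMod.cast_zero, mul_zero]⟩
  rw [pLift, ← ZMod.natCast_val, ← Nat.cast_mul, ZMod.natCast_eq_zero_iff, pow_succ',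
    Nat.mul_dvd_mul_iff_left (NeZero.pos p)] at hx
  rw [← ZMod.natCast_zmod_val x, ZMod.natCast_eq_zero_iff]
  exact hx

theorem castHom_eq_zero_iff_exists_pLift_eq (X : ZMod (p ^ (m + 1))) :
    ZMod.castHom (dvd_pow_self p m.succ_ne_zero) (ZMod p) X = 0 ↔ ∃ x, pLift p m x = X := by
  constructor
  · rw [ZMod.castHom_apply, ← ZMod.intCast_cast X, ZMod.intCast_zmod_eq_zero_iff_dvd]
    rintro ⟨k, hk⟩
    refine ⟨ZMod.cast ((k : ℤ) : ZMod (p ^ (m + 1))), ?_⟩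
    rw [← natCast_mul_eq_pLift, ← ZMod.intCast_zmod_cast X, hk]
    push_cast
    rfl
  · rintro ⟨x, rfl⟩
    rw [pLift, map_mul, map_natCast, ZMod.natCast_self, zero_mul]

theorem pLift_injective : Function.Injective (pLift p m) := fun x y h => by
  rw [← sub_eq_zero, ← pLift_eq_zero_iff p, pLift_sub, h, sub_self]

end

section

variable (p : ℕ) [NeZero p] {m : ℕ}

theorem map_castHom_eq_one_iff {n : Type*} [DecidableEq n]
    (M : Matrix n n (ZMod (p ^ (m + 1)))) :
    M.map (ZMod.castHom (dvd_pow_self p m.succ_ne_zero) (ZMod p)) = 1 ↔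
      ∃ N : Matrix n n (ZMod (p ^ m)), 1 + N.map (pLift p m) = M := by
  set ρ := ZMod.castHom (dvd_pow_self p m.succ_ne_zero) (ZMod p)
  have hρ_one : (1 : Matrix n n _).map ρ = 1 := Matrix.map_one ρ (map_zero ρ) (map_one ρ)
  constructor
  · intro hM
    have hdiff : (M - 1).map ρ = 0 := by rw [Matrix.map_sub ρ (map_sub ρ), hM, hρ_one, sub_self]
    choose N hN using fun i j =>
      (castHom_eq_zero_iff_exists_pLift_eq p _).1 (congrFun₂ hdiff i j)
    exact ⟨Matrix.of N, by ext i j; simp [hN]⟩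
  · rintro ⟨N, rfl⟩
    rw [Matrix.map_add ρ (map_add ρ), hρ_one, Matrix.map_map, add_eq_left]
    ext i j
    exact (castHom_eq_zero_iff_exists_pLift_eq p _).2 ⟨N i j, rfl⟩

theorem det_one_add_map_pLift (N : Matrix (Fin 2) (Fin 2) (ZMod (p ^ m))) :
    (1 + N.map (pLift p m)).det = 1 + pLift p m (N.trace + p * N.det) := by
  rw [det_fin_two, trace_fin_two, det_fin_two, mul_sub, pLift_add, pLift_add, pLift_sub,
    ← pLift_mul_pLift, ← pLift_mul_pLift]
  simp only [Matrix.add_apply, one_apply_eq, one_apply_ne, ne_eq, zero_ne_one, one_ne_zero,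
    not_false_eq_true, map_apply, zero_add]
  ring

theorem det_one_add_map_pLift_eq_one_iff (N : Matrix (Fin 2) (Fin 2) (ZMod (p ^ m))) :
    (1 + N.map (pLift p m)).det = 1 ↔ N.trace + p * N.det = 0 := by
  rw [det_one_add_map_pLift, add_eq_left, pLift_eq_zero_iff]

theorem one_add_map_pLift_injective {n : Type*} [DecidableEq n] :
    Function.Injective fun N : Matrix n n (ZMod (p ^ m)) => 1 + N.map (pLift p m) :=
  (add_right_injective 1).comp (Matrix.map_injective (pLift_injective p))

end

theorem ZMod.eq_inv_mul_iff_add_add_mul_eq_zero {n : ℕ} {t a b c d : ZMod n}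
    (hu : IsUnit (1 + t * a)) :
    d = (1 + t * a)⁻¹ * (t * b * c - a) ↔ a + d + t * (a * d - b * c) = 0 := by
  have hmul_inv := ZMod.mul_inv_of_unit _ hu
  constructor
  · rintro rfl
    linear_combination (t * b * c - a) * hmul_inv
  · intro h
    linear_combination (1 + t * a)⁻¹ * h - d * hmul_inv

theorem isUnit_one_add_natCast_mul (p m : ℕ) (a : ZMod (p ^ m)) : IsUnit (1 + p * a) := by
  refine IsNilpotent.isUnit_one_add ⟨m, ?_⟩
  rw [mul_pow, ← Nat.cast_pow, ZMod.natCast_self, zero_mul]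

section

variable (p m : ℕ)

def kernelParam (x : ZMod (p ^ m) × ZMod (p ^ m) × ZMod (p ^ m)) :
    Matrix (Fin 2) (Fin 2) (ZMod (p ^ m)) :=
  !![x.1, x.2.1; x.2.2, (1 + p * x.1)⁻¹ * (p * x.2.1 * x.2.2 - x.1)]

theorem kernelParam_injective : Function.Injective (kernelParam p m) :=
  fun _ _ h => Prod.ext (congrFun₂ h 0 0) (Prod.ext (congrFun₂ h 0 1) (congrFun₂ h 1 0))

theorem exists_kernelParam_eq_iff (N : Matrix (Fin 2) (Fin 2) (ZMod (p ^ m))) :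
    (∃ x, kernelParam p m x = N) ↔ N.trace + p * N.det = 0 := by
  rw [trace_fin_two, det_fin_two,
    ← ZMod.eq_inv_mul_iff_add_add_mul_eq_zero (isUnit_one_add_natCast_mul p m _)]
  constructor
  · rintro ⟨x, rfl⟩
    rfl
  · intro h
    refine ⟨(N 0 0, N 0 1, N 1 0), ?_⟩
    rw [Matrix.eta_fin_two N, h]
    rfl

end

theorem planted_kernel_bijection_general (p m : ℕ) (hp : p.Prime) :
    let lift : ZMod (p ^ m) → ZMod (p ^ (m + 1)) :=
      fun x => (p : ZMod (p ^ (m + 1))) * (ZMod.cast x : ZMod (p ^ (m + 1)))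
    let f : ZMod (p ^ m) × ZMod (p ^ m) × ZMod (p ^ m) →
        Matrix (Fin 2) (Fin 2) (ZMod (p ^ (m + 1))) := fun x =>
      let a := x.1
      let b := x.2.1
      let c := x.2.2
      let d : ZMod (p ^ m) := (1 + p * a)⁻¹ * (p * b * c - a)
      !![1 + lift a, lift b; lift c, 1 + lift d]
    let K : Set (Matrix (Fin 2) (Fin 2) (ZMod (p ^ (m + 1)))) :=
      {M | M.det = 1 ∧
        M.map (ZMod.castHom (dvd_pow_self p (Nat.succ_ne_zero m)) (ZMod p)) = 1}
    Function.Injective f ∧ Set.range f = K ∧ Nat.card K = p ^ (3 * m) := by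
  have : NeZero p := ⟨hp.ne_zero⟩
  intro lift f K
  have hf : f = (fun N => 1 + N.map (pLift p m)) ∘ kernelParam p m := by
    funext x
    ext i j
    fin_cases i <;> fin_cases j <;> simp [f, lift, kernelParam, pLift]
  have hinj : Function.Injective f :=
    hf ▸ (one_add_map_pLift_injective p).comp (kernelParam_injective p m)
  have hrange : Set.range f = K := by
    ext M
    simp only [K, Set.mem_ofPred_eq, map_castHom_eq_one_iff, hf, Set.range_comp]
    constructor
    · rintro ⟨N, ⟨x, rfl⟩, rfl⟩
      have htrace := (exists_kernelParam_eq_iff p m _).1 ⟨x, rfl⟩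
      exact ⟨(det_one_add_map_pLift_eq_one_iff p _).2 htrace, _, rfl⟩
    · rintro ⟨hdet, N, rfl⟩
      have htrace := (det_one_add_map_pLift_eq_one_iff p N).1 hdet
      exact ⟨N, (exists_kernelParam_eq_iff p m N).2 htrace, rfl⟩
  refine ⟨hinj, hrange, ?_⟩
  rw [← hrange, Nat.card_range_of_injective hinj, Nat.card_prod, Nat.card_prod, Nat.card_zmod]
  ring

/-- Let `p` be a prime and `m ≥ 1`.  The map
`φ(a,b,c) = I + p·[[a,b],[c,d]]` with `d = (1+pa)⁻¹(pbc − a)` computed in `ℤ/pᵐℤ`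
is a bijection from `(ℤ/pᵐℤ)³` onto the kernel of the reduction map
`SL₂(ℤ/p^{m+1}ℤ) → SL₂(ℤ/pℤ)`; in particular that kernel has `p^{3m}` elements. -/
theorem planted_kernel_bijection (p m : ℕ) (hp : p.Prime) (hm : 1 ≤ m) :
    let lift : ZMod (p ^ m) → ZMod (p ^ (m + 1)) :=
      fun x => (p : ZMod (p ^ (m + 1))) * (ZMod.cast x : ZMod (p ^ (m + 1)))
    let f : ZMod (p ^ m) × ZMod (p ^ m) × ZMod (p ^ m) →
        Matrix (Fin 2) (Fin 2) (ZMod (p ^ (m + 1))) := fun x =>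
      let a := x.1
      let b := x.2.1
      let c := x.2.2
      let d : ZMod (p ^ m) := (1 + p * a)⁻¹ * (p * b * c - a)
      !![1 + lift a, lift b; lift c, 1 + lift d]
    let K : Set (Matrix (Fin 2) (Fin 2) (ZMod (p ^ (m + 1)))) :=
      {M | M.det = 1 ∧
        M.map (ZMod.castHom (dvd_pow_self p (Nat.succ_ne_zero m)) (ZMod p)) = 1}
    Function.Injective f ∧ Set.range f = K ∧ Nat.card K = p ^ (3 * m) :=
  planted_kernel_bijection_general p m hp
end

section
/- Let A, B be Hermitian operators on a finite-dimensional Hilbert space with AB + BA = 0 and A² = B² = I, and let |ψ⟩ be a unit vector. Define ΔA² = ⟨ψ|A²|ψ⟩ − ⟨ψ|A|ψ⟩² and similarly ΔB². Then ΔA² + ΔB² ≥ 1. Equivalently, ⟨ψ|A|ψ⟩² + ⟨ψ|B|ψ⟩² ≤ 1. -/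
/-!
With `a = ⟨A⟩` and `b = ⟨B⟩`, the Hermitian matrix `M = a A + b B` squares to `(a² + b²) • 1`
because the cross terms cancel by anticommutation, while `⟨M⟩ = a² + b²`. Cauchy–Schwarz,
`|⟨ψ, M ψ⟩|² ≤ ‖ψ‖² ‖M ψ‖² = ⟨M²⟩`, then reads `(a² + b²)² ≤ a² + b²`.
-/

open Matrix RCLike

theorem smul_add_smul_mul_self_of_anticommute {S R : Type*} [CommSemiring S] [Semiring R]
    [Module S R] [IsScalarTower S R R] [SMulCommClass S R R] {x y : R}
    (hx : x * x = 1) (hy : y * y = 1) (hxy : x * y + y * x = 0) (a b : S) :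
    (a • x + b • y) * (a • x + b • y) = (a ^ 2 + b ^ 2) • (1 : R) := by
  have expand : (a • x + b • y) * (a • x + b • y)
      = (a * a) • (x * x) + (a * b) • (x * y + y * x) + (b * b) • (y * y) := by
    simp only [add_mul, mul_add, smul_mul_smul_comm, smul_add, mul_comm b a]
    abel
  rw [expand, hx, hy, hxy, smul_zero, add_zero, ← add_smul, sq, sq]

namespace Matrix

variable {𝕜 n : Type*} [RCLike 𝕜] [Fintype n]

theorem re_star_dotProduct_self (ψ : n → 𝕜) : re (star ψ ⬝ᵥ ψ) = ∑ i, ‖ψ i‖ ^ 2 := by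
  simp only [dotProduct, Pi.star_apply, star_def, RCLike.conj_mul, map_sum, ← ofReal_pow, ofReal_re]

theorem norm_star_dotProduct_mulVec_sq_le (M : Matrix n n 𝕜) (ψ : n → 𝕜) :
    ‖star ψ ⬝ᵥ M *ᵥ ψ‖ ^ 2 ≤ re (star ψ ⬝ᵥ ψ) * re (star ψ ⬝ᵥ (Mᴴ * M) *ᵥ ψ) := by
  let x := WithLp.toLp 2 ψ
  let y := WithLp.toLp 2 (M *ᵥ ψ)
  have hxy : star ψ ⬝ᵥ M *ᵥ ψ = inner 𝕜 x y := by
    rw [EuclideanSpace.inner_toLp_toLp, dotProduct_comm]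
  have hxx : star ψ ⬝ᵥ ψ = inner 𝕜 x x := by
    rw [EuclideanSpace.inner_toLp_toLp, dotProduct_comm]
  have hyy : star ψ ⬝ᵥ (Mᴴ * M) *ᵥ ψ = inner 𝕜 y y := by
    rw [EuclideanSpace.inner_toLp_toLp, dotProduct_comm (M *ᵥ ψ), star_mulVec,
      ← dotProduct_mulVec, mulVec_mulVec]
  rw [hxy, hxx, hyy, sq]
  calc ‖inner 𝕜 x y‖ * ‖inner 𝕜 x y‖ = ‖inner 𝕜 x y‖ * ‖inner 𝕜 y x‖ := by rw [norm_inner_symm]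
    _ ≤ _ := inner_mul_inner_self_le x y

theorem re_star_dotProduct_smul_add_smul_mulVec (A B : Matrix n n 𝕜) (a b : ℝ) (ψ : n → 𝕜) :
    re (star ψ ⬝ᵥ ((a : 𝕜) • A + (b : 𝕜) • B) *ᵥ ψ)
      = a * re (star ψ ⬝ᵥ A *ᵥ ψ) + b * re (star ψ ⬝ᵥ B *ᵥ ψ) := by
  simp only [add_mulVec, smul_mulVec, dotProduct_add, dotProduct_smul, smul_eq_mul, map_add,
    re_ofReal_mul]

theorem sq_add_sq_re_star_dotProduct_mulVec_le_one [DecidableEq n] {A B : Matrix n n 𝕜}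
    (hA : A.IsHermitian) (hB : B.IsHermitian)
    (hAB : A * B + B * A = 0) (hA2 : A * A = 1) (hB2 : B * B = 1)
    {ψ : n → 𝕜} (hψ : re (star ψ ⬝ᵥ ψ) = 1) :
    re (star ψ ⬝ᵥ A *ᵥ ψ) ^ 2 + re (star ψ ⬝ᵥ B *ᵥ ψ) ^ 2 ≤ 1 := by
  set a := re (star ψ ⬝ᵥ A *ᵥ ψ)
  set b := re (star ψ ⬝ᵥ B *ᵥ ψ)
  set M := (a : 𝕜) • A + (b : 𝕜) • B
  have hM : Mᴴ = M := by
    simp only [M, conjTranspose_add, conjTranspose_smul, hA.eq, hB.eq, star_def, conj_ofReal]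
  have hMM : Mᴴ * M = ((a ^ 2 + b ^ 2 : ℝ) : 𝕜) • 1 := by
    rw [hM, smul_add_smul_mul_self_of_anticommute hA2 hB2 hAB]
    push_cast
    rfl
  have hexpM : re (star ψ ⬝ᵥ M *ᵥ ψ) = a ^ 2 + b ^ 2 := by
    rw [re_star_dotProduct_smul_add_smul_mulVec]; ring
  have hexpMM : re (star ψ ⬝ᵥ (Mᴴ * M) *ᵥ ψ) = a ^ 2 + b ^ 2 := by
    rw [hMM, smul_mulVec, one_mulVec, dotProduct_smul, smul_eq_mul, re_ofReal_mul, hψ, mul_one]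
  have hcs := norm_star_dotProduct_mulVec_sq_le M ψ
  rw [hψ, one_mul, hexpMM] at hcs
  have hsq : (a ^ 2 + b ^ 2) ^ 2 ≤ a ^ 2 + b ^ 2 :=
    calc (a ^ 2 + b ^ 2) ^ 2 = re (star ψ ⬝ᵥ M *ᵥ ψ) ^ 2 := by rw [hexpM]
      _ ≤ ‖star ψ ⬝ᵥ M *ᵥ ψ‖ ^ 2 := sq_le_sq.mpr ((abs_re_le_norm _).trans (le_abs_self _))
      _ ≤ a ^ 2 + b ^ 2 := hcs
  nlinarith

end Matrix

/-- Uncertainty principle for anticommuting involutions (pure states): if `A, B` are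
Hermitian, `AB + BA = 0`, `A² = B² = I`, and `ψ` is a unit vector, then
`ΔA² + ΔB² ≥ 1`, equivalently `⟨ψ|A|ψ⟩² + ⟨ψ|B|ψ⟩² ≤ 1`. -/
theorem uncertainty_pure (N : ℕ) (A B : Matrix (Fin N) (Fin N) ℂ)
    (hA : A.IsHermitian) (hB : B.IsHermitian)
    (hAB : A * B + B * A = 0) (hA2 : A * A = 1) (hB2 : B * B = 1)
    (ψ : Fin N → ℂ) (hψ : ∑ i, ‖ψ i‖ ^ 2 = 1) :
    ((dotProduct (star ψ) ((A * A).mulVec ψ)).re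
        - (dotProduct (star ψ) (A.mulVec ψ)).re ^ 2)
      + ((dotProduct (star ψ) ((B * B).mulVec ψ)).re
        - (dotProduct (star ψ) (B.mulVec ψ)).re ^ 2) ≥ 1
    ∧ (dotProduct (star ψ) (A.mulVec ψ)).re ^ 2
        + (dotProduct (star ψ) (B.mulVec ψ)).re ^ 2 ≤ 1 := by
  have hunit : re (star ψ ⬝ᵥ ψ) = 1 := by rw [re_star_dotProduct_self, hψ]
  have hbound := sq_add_sq_re_star_dotProduct_mulVec_le_one hA hB hAB hA2 hB2 hunit
  simp only [re_to_complex] at hunit hbound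
  refine ⟨?_, hbound⟩
  rw [hA2, hB2, one_mulVec, hunit]
  linarith
end

section
/- Let 𝒞 = CSS(C_X, C_Z) be a CSS code over 𝔽₂ of block length n, distance d, exhibiting (c₁, c₂, ε₀)-clustering. Fix ε' with 2ε' < ε₀, 4c₁ε' < c₂, and 2c₁ε'n < d. For y ∈ G_Z^{ε'} define the cluster Clust(y) = {y' ∈ G_Z^{ε'} : |y + y'|_{C_X^⊥} ≤ 2c₁ε'n}. Then: (1) the clusters form a partition of G_Z^{ε'}, i.e., for y, y' ∈ G_Z^{ε'}, either Clust(y) = Clust(y') or they are disjoint; (2) distinct clusters satisfy dis(Clust(y), Clust(y')) ≥ c₂n; (3) for c ∈ C_Z, Clust(y + c) = Clust(y) + c, and Clust(y + c) = Clust(y) if and only if c ∈ C_X^⊥. -/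
variable {F : Type*} [Field F] [Fintype F] [DecidableEq F] {n : ℕ}

/-- The dual code of a set of vectors: all vectors orthogonal (under the standard
dot product) to every element of `S`. -/
def dualSet (S : Set (Fin n → F)) : Set (Fin n → F) :=
  {x | ∀ y ∈ S, dotProduct x y = 0}

/-- `|y|_C`: the minimum Hamming distance from `y` to an element of `S`. -/
noncomputable def distToCode (S : Set (Fin n → F)) (y : Fin n → F) : ℕ :=
  sInf ((fun c => hammingDist y c) '' S)

/-!
Put `δ(a, b) = |a + b|_{C_X^⊥}`; it is symmetric and satisfies the triangle inequality because
`C_X^⊥` is a group. For `a, b ∈ G_Z^{ε'}` the syndrome of `a + b` has weight at most `2ε' m_Z`,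
so clustering at `2ε'` gives `δ(a, b) ≤ 2c₁ε'n` or `δ(a, b) ≥ c₂n > 4c₁ε'n`. Hence
`δ ≤ 2c₁ε'n` is transitive on `G_Z^{ε'}`: the triangle inequality only yields `4c₁ε'n`, which
rules out the far alternative. The clusters are therefore the classes of an equivalence relation
on `G_Z^{ε'}`, points of distinct clusters are `δ`-far, and `δ` is dominated by the Hamming
distance. Translation by `c ∈ C_Z` preserves syndromes, and `Clust(y + c) = Clust(y)` iff
`δ(y + c, y) = |c|_{C_X^⊥} ≤ 2c₁ε'n`, which the distance bound `2c₁ε'n < d` forbids for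
`c ∉ C_X^⊥`.
-/

section Hamming

variable {ι : Type*} [Fintype ι] {β : ι → Type*} [∀ i, AddCommGroup (β i)]
  [∀ i, DecidableEq (β i)]

theorem hammingNorm_add_le (x y : ∀ i, β i) :
    hammingNorm (x + y) ≤ hammingNorm x + hammingNorm y := by
  simpa [← Hamming.toHamming_add, ← Nat.cast_add, Nat.cast_le] using
    norm_add_le (Hamming.toHamming x) (Hamming.toHamming y)

theorem hammingDist_add_add_le (a b c d : ∀ i, β i) :
    hammingDist (a + b) (c + d) ≤ hammingDist a c + hammingDist b d := by
  simpa [← Hamming.toHamming_add, ← Nat.cast_add, Nat.cast_le] using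
    dist_add_add_le (Hamming.toHamming a) (Hamming.toHamming b) (Hamming.toHamming c)
      (Hamming.toHamming d)

end Hamming

def dualSubmodule {K : Type*} [Field K] (S : Set (Fin n → K)) : Submodule K (Fin n → K) where
  carrier := dualSet S
  add_mem' {x y} hx hy z hz := by rw [add_dotProduct, hx z hz, hy z hz, add_zero]
  zero_mem' z _ := zero_dotProduct z
  smul_mem' k x hx z hz := by rw [smul_dotProduct, hx z hz, smul_zero]

section DistToCode

variable {R : Type*} [DecidableEq R]

theorem distToCode_le_hammingDist {S : Set (Fin n → R)} {c : Fin n → R} (hc : c ∈ S)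
    (y : Fin n → R) : distToCode S y ≤ hammingDist y c :=
  Nat.sInf_le ⟨c, hc, rfl⟩

theorem exists_mem_distToCode_eq {S : Set (Fin n → R)} (hS : S.Nonempty) (y : Fin n → R) :
    ∃ c ∈ S, distToCode S y = hammingDist y c := by
  obtain ⟨c, hc, h⟩ := Nat.sInf_mem (hS.image fun c => hammingDist y c)
  exact ⟨c, hc, h.symm⟩

variable [AddCommGroup R] (S : AddSubgroup (Fin n → R))

theorem distToCode_le_hammingNorm (y : Fin n → R) :
    distToCode S y ≤ hammingNorm y :=
  distToCode_le_hammingDist S.zero_mem y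

theorem distToCode_eq_zero_of_mem {c : Fin n → R} (hc : c ∈ S) :
    distToCode S c = 0 := by
  simpa using distToCode_le_hammingDist hc c

theorem distToCode_add_le (a b : Fin n → R) :
    distToCode S (a + b) ≤ distToCode S a + distToCode S b := by
  obtain ⟨s, hs, hsa⟩ := exists_mem_distToCode_eq ⟨0, S.zero_mem⟩ a
  obtain ⟨t, ht, htb⟩ := exists_mem_distToCode_eq ⟨0, S.zero_mem⟩ b
  calc distToCode S (a + b) ≤ hammingDist (a + b) (s + t) :=
        distToCode_le_hammingDist (S.add_mem hs ht) _
    _ ≤ hammingDist a s + hammingDist b t := hammingDist_add_add_le a b s t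
    _ = distToCode S a + distToCode S b := by rw [hsa, htb]

def CodeClose (S : AddSubgroup (Fin n → R)) (B : ℝ) (a b : Fin n → R) : Prop :=
  (distToCode S (a + b) : ℝ) ≤ B

theorem CodeClose.symm {B : ℝ} {a b : Fin n → R} (h : CodeClose S B a b) :
    CodeClose S B b a := by
  rwa [CodeClose, add_comm]

theorem codeClose_add_iff {B : ℝ} {c : Fin n → R} (a b : Fin n → R) :
    CodeClose S B (a + c) b ↔ CodeClose S B a (b + c) := by
  rw [CodeClose, CodeClose, add_right_comm, add_assoc]

theorem distToCode_le_iff_mem {B : ℝ} {d : ℕ} (hB : 0 ≤ B) (hBd : B < d) {c : Fin n → R}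
    (hdist : c ∉ S → d ≤ distToCode S c) :
    (distToCode S c : ℝ) ≤ B ↔ c ∈ S := by
  refine ⟨fun hle => by_contra fun hc => ?_, fun hc => ?_⟩
  · have : (d : ℝ) ≤ distToCode S c := by exact_mod_cast hdist hc
    linarith
  · rwa [distToCode_eq_zero_of_mem S hc, Nat.cast_zero]

end DistToCode

section CharTwo

variable {R : Type*} [Ring R] [CharP R 2]

theorem neg_eq_self_of_charTwo (x : Fin n → R) : -x = x :=
  funext fun i => CharTwo.neg_eq (x i)

theorem add_self_eq_zero_of_charTwo (x : Fin n → R) : x + x = 0 :=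
  funext fun i => CharTwo.add_self_eq_zero (x i)

variable [DecidableEq R] (S : AddSubgroup (Fin n → R))

theorem distToCode_add_le_hammingDist (a b : Fin n → R) :
    distToCode S (a + b) ≤ hammingDist a b := by
  rw [hammingDist_eq_hammingNorm, neg_eq_self_of_charTwo]
  exact distToCode_le_hammingNorm S (a + b)

theorem distToCode_add_le_add (a b c : Fin n → R) :
    distToCode S (a + c) ≤ distToCode S (a + b) + distToCode S (b + c) := by
  have hsum : (a + b) + (b + c) = a + c := by
    rw [← add_assoc, add_assoc a b b, add_self_eq_zero_of_charTwo, add_zero]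
  exact hsum ▸ distToCode_add_le S (a + b) (b + c)

theorem codeClose_self {B : ℝ} (hB : 0 ≤ B) (a : Fin n → R) : CodeClose S B a a := by
  rwa [CodeClose, add_self_eq_zero_of_charTwo, distToCode_eq_zero_of_mem S S.zero_mem,
    Nat.cast_zero]

theorem codeClose_add_left_self_iff {B : ℝ} (y c : Fin n → R) :
    CodeClose S B (y + c) y ↔ (distToCode S c : ℝ) ≤ B := by
  rw [CodeClose, add_right_comm, add_self_eq_zero_of_charTwo, zero_add]

theorem CodeClose.trans_of_gap {b c : ℝ} (hbc : 2 * b < c) {x y z : Fin n → R}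
    (hgap : CodeClose S (b * n) x z ∨ c * n ≤ distToCode S (x + z))
    (hxy : CodeClose S (b * n) x y) (hyz : CodeClose S (b * n) y z) :
    CodeClose S (b * n) x z := by
  refine hgap.elim id fun hfar => ?_
  have htri : (distToCode S (x + z) : ℝ) ≤ distToCode S (x + y) + distToCode S (y + z) := by
    exact_mod_cast distToCode_add_le_add S x y z
  unfold CodeClose at hxy hyz ⊢
  -- `c n ≤ |x + z|_S ≤ 2 b n` is only possible when `n = 0`
  have hn : (n : ℝ) = 0 := le_antisymm (by nlinarith) n.cast_nonneg
  rw [hn] at hxy hyz ⊢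
  linarith

end CharTwo

section SyndromeBall

variable {R : Type*} [Ring R] [DecidableEq R] {m : ℕ}

def syndromeBall (H : Matrix (Fin m) (Fin n) R) (ε : ℝ) : Set (Fin n → R) :=
  {y | (hammingNorm (H.mulVec y) : ℝ) ≤ ε * m}

theorem add_mem_syndromeBall {H : Matrix (Fin m) (Fin n) R}
    {ε₁ ε₂ : ℝ} {a b : Fin n → R} (ha : a ∈ syndromeBall H ε₁) (hb : b ∈ syndromeBall H ε₂) :
    a + b ∈ syndromeBall H (ε₁ + ε₂) :=
  calc (hammingNorm (H.mulVec (a + b)) : ℝ)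
      ≤ hammingNorm (H.mulVec a) + hammingNorm (H.mulVec b) := by
        rw [Matrix.mulVec_add]; exact_mod_cast hammingNorm_add_le _ _
    _ ≤ ε₁ * m + ε₂ * m := add_le_add ha hb
    _ = (ε₁ + ε₂) * m := by ring

theorem add_mem_syndromeBall_iff {H : Matrix (Fin m) (Fin n) R} {c : Fin n → R}
    (hc : H.mulVec c = 0) {ε : ℝ} (z : Fin n → R) :
    z + c ∈ syndromeBall H ε ↔ z ∈ syndromeBall H ε := by
  simp only [syndromeBall, Set.mem_ofPred_eq, Matrix.mulVec_add, hc, add_zero]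

end SyndromeBall

section Cluster

variable {α : Type*} {r : α → α → Prop} {G : Set α}

def cluster (r : α → α → Prop) (G : Set α) (y : α) : Set α :=
  {y' ∈ G | r y y'}

theorem cluster_eq_of_rel (hsymm : ∀ ⦃a b⦄, r a b → r b a)
    (htrans : ∀ ⦃a b c⦄, a ∈ G → b ∈ G → c ∈ G → r a b → r b c → r a c)
    {y y' : α} (hy : y ∈ G) (hy' : y' ∈ G) (h : r y y') : cluster r G y = cluster r G y' := by
  ext z
  exact ⟨fun ⟨hz, hyz⟩ => ⟨hz, htrans hy' hy hz (hsymm h) hyz⟩,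
    fun ⟨hz, hy'z⟩ => ⟨hz, htrans hy hy' hz h hy'z⟩⟩

theorem cluster_eq_iff (hrefl : ∀ a, r a a) (hsymm : ∀ ⦃a b⦄, r a b → r b a)
    (htrans : ∀ ⦃a b c⦄, a ∈ G → b ∈ G → c ∈ G → r a b → r b c → r a c)
    {y y' : α} (hy : y ∈ G) (hy' : y' ∈ G) : cluster r G y = cluster r G y' ↔ r y y' := by
  refine ⟨fun h => ?_, cluster_eq_of_rel hsymm htrans hy hy'⟩
  have hmem : y' ∈ cluster r G y := h ▸ ⟨hy', hrefl y'⟩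
  exact hmem.2

theorem cluster_eq_or_disjoint (hsymm : ∀ ⦃a b⦄, r a b → r b a)
    (htrans : ∀ ⦃a b c⦄, a ∈ G → b ∈ G → c ∈ G → r a b → r b c → r a c)
    {y y' : α} (hy : y ∈ G) (hy' : y' ∈ G) :
    cluster r G y = cluster r G y' ∨ Disjoint (cluster r G y) (cluster r G y') := by
  by_cases h : r y y'
  · exact .inl (cluster_eq_of_rel hsymm htrans hy hy' h)
  · exact .inr (Set.disjoint_left.2 fun z hz hz' => h (htrans hy hz.1 hy' hz.2 (hsymm hz'.2)))

theorem not_rel_of_mem_cluster_of_ne (hsymm : ∀ ⦃a b⦄, r a b → r b a)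
    (htrans : ∀ ⦃a b c⦄, a ∈ G → b ∈ G → c ∈ G → r a b → r b c → r a c)
    {y y' a b : α} (hy : y ∈ G) (hy' : y' ∈ G) (hne : cluster r G y ≠ cluster r G y')
    (ha : a ∈ cluster r G y) (hb : b ∈ cluster r G y') : ¬ r a b := fun hab =>
  hne <| cluster_eq_of_rel hsymm htrans hy hy' <|
    htrans hy ha.1 hy' ha.2 (htrans ha.1 hb.1 hy' hab (hsymm hb.2))

theorem cluster_add_eq_preimage [Add α] {c : α} (hG : ∀ z, z + c ∈ G ↔ z ∈ G)
    (hr : ∀ a b, r (a + c) b ↔ r a (b + c)) (y : α) :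
    cluster r G (y + c) = (· + c) ⁻¹' cluster r G y := by
  ext z
  exact and_congr (hG z).symm (hr y z)

end Cluster

theorem cluster_partition_general {mX mZ : ℕ}
    (HX : Matrix (Fin mX) (Fin n) (ZMod 2)) (HZ : Matrix (Fin mZ) (Fin n) (ZMod 2))
    (c₁ c₂ ε₀ : ℝ) (hc₁ : 0 < c₁)
    (D : Set (Fin n → ZMod 2)) (hD : D = dualSet {y | HX.mulVec y = 0})
    (hclust : ∀ ε : ℝ, 0 < ε → ε < ε₀ → ∀ y : Fin n → ZMod 2,
      (hammingNorm (HZ.mulVec y) : ℝ) ≤ ε * mZ →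
      (distToCode D y : ℝ) ≤ c₁ * ε * n ∨ (distToCode D y : ℝ) ≥ c₂ * n)
    (d : ℕ) (hdist : ∀ c : Fin n → ZMod 2, HZ.mulVec c = 0 → c ∉ D → d ≤ distToCode D c)
    (ε' : ℝ) (hε' : 0 < ε') (h1 : 2 * ε' < ε₀) (h2 : 4 * c₁ * ε' < c₂)
    (h3 : 2 * c₁ * ε' * n < (d : ℝ))
    (G : Set (Fin n → ZMod 2))
    (hG : G = {y | (hammingNorm (HZ.mulVec y) : ℝ) ≤ ε' * mZ})
    (Clust : (Fin n → ZMod 2) → Set (Fin n → ZMod 2))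
    (hClust : ∀ y, Clust y = {y' ∈ G | (distToCode D (y + y') : ℝ) ≤ 2 * c₁ * ε' * n}) :
    (∀ y ∈ G, ∀ y' ∈ G, Clust y = Clust y' ∨ Disjoint (Clust y) (Clust y')) ∧
    (∀ y ∈ G, ∀ y' ∈ G, Clust y ≠ Clust y' →
      ∀ a ∈ Clust y, ∀ b ∈ Clust y', c₂ * n ≤ (hammingDist a b : ℝ)) ∧
    (∀ y ∈ G, ∀ c : Fin n → ZMod 2, HZ.mulVec c = 0 →
      Clust (y + c) = (fun u => u + c) '' Clust y ∧ (Clust (y + c) = Clust y ↔ c ∈ D)) := by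
  obtain ⟨W, rfl⟩ : ∃ W : AddSubgroup (Fin n → ZMod 2), (W : Set _) = D :=
    ⟨(dualSubmodule _).toAddSubgroup, hD.symm⟩
  set B : ℝ := 2 * c₁ * ε' * n
  obtain rfl : G = syndromeBall HZ ε' := hG
  obtain rfl : Clust = cluster (CodeClose W B) (syndromeBall HZ ε') := funext hClust
  set G := syndromeBall HZ ε'
  have hB₀ : 0 ≤ B := by positivity
  have hgap : ∀ a ∈ G, ∀ b ∈ G, CodeClose W B a b ∨ c₂ * n ≤ distToCode W (a + b) :=
    fun a ha b hb =>
      (hclust (2 * ε') (by positivity) h1 (a + b) (two_mul ε' ▸ add_mem_syndromeBall ha hb)).imp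
        (fun h => by unfold CodeClose; linarith) ge_iff_le.1
  have htrans : ∀ ⦃a b c⦄, a ∈ G → b ∈ G → c ∈ G →
      CodeClose W B a b → CodeClose W B b c → CodeClose W B a c :=
    fun a _ c ha _ hc => CodeClose.trans_of_gap W (by linarith) (hgap a ha c hc)
  have hsymm : ∀ ⦃a b⦄, CodeClose W B a b → CodeClose W B b a := fun _ _ h => h.symm
  refine ⟨fun y hy y' hy' => cluster_eq_or_disjoint hsymm htrans hy hy',
    fun y hy y' hy' hne a ha b hb => ?_, fun y hy c hc => ⟨?_, ?_⟩⟩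
  · calc c₂ * n ≤ distToCode W (a + b) :=
          (hgap a ha.1 b hb.1).resolve_left
            (not_rel_of_mem_cluster_of_ne hsymm htrans hy hy' hne ha hb)
      _ ≤ hammingDist a b := by exact_mod_cast distToCode_add_le_hammingDist W a b
  · rw [Set.image_add_right, neg_eq_self_of_charTwo]
    exact cluster_add_eq_preimage (add_mem_syndromeBall_iff hc) (codeClose_add_iff W) y
  · rw [cluster_eq_iff (codeClose_self W hB₀) hsymm htrans
      ((add_mem_syndromeBall_iff hc y).2 hy) hy, codeClose_add_left_self_iff]
    exact distToCode_le_iff_mem W hB₀ h3 (hdist c hc)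

/-- Clustering lemma for approximate-codeword clusters: under `(c₁,c₂,ε₀)`-clustering
and suitable smallness of `ε'`, the clusters `Clust(y)` for `y ∈ G_Z^{ε'}` form a
partition of `G_Z^{ε'}`, distinct clusters are at Hamming distance `≥ c₂n`, and for
`c ∈ C_Z` one has `Clust(y+c) = Clust(y)+c`, with `Clust(y+c) = Clust(y)` iff
`c ∈ C_X^⊥`. -/
theorem cluster_partition {mX mZ : ℕ}
    (HX : Matrix (Fin mX) (Fin n) (ZMod 2)) (HZ : Matrix (Fin mZ) (Fin n) (ZMod 2))
    (hCSS : dualSet {y | HX.mulVec y = 0} ⊆ {y | HZ.mulVec y = 0})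
    (c₁ c₂ ε₀ : ℝ) (hc₁ : 0 < c₁) (hc₂ : 0 < c₂) (hε₀ : 0 < ε₀)
    (D : Set (Fin n → ZMod 2)) (hD : D = dualSet {y | HX.mulVec y = 0})
    (hclust : ∀ ε : ℝ, 0 < ε → ε < ε₀ → ∀ y : Fin n → ZMod 2,
      (hammingNorm (HZ.mulVec y) : ℝ) ≤ ε * mZ →
      (distToCode D y : ℝ) ≤ c₁ * ε * n ∨ (distToCode D y : ℝ) ≥ c₂ * n)
    (d : ℕ) (hdist : ∀ c : Fin n → ZMod 2, HZ.mulVec c = 0 → c ∉ D → d ≤ distToCode D c)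
    (ε' : ℝ) (hε' : 0 < ε') (h1 : 2 * ε' < ε₀) (h2 : 4 * c₁ * ε' < c₂)
    (h3 : 2 * c₁ * ε' * n < (d : ℝ))
    (G : Set (Fin n → ZMod 2))
    (hG : G = {y | (hammingNorm (HZ.mulVec y) : ℝ) ≤ ε' * mZ})
    (Clust : (Fin n → ZMod 2) → Set (Fin n → ZMod 2))
    (hClust : ∀ y, Clust y = {y' ∈ G | (distToCode D (y + y') : ℝ) ≤ 2 * c₁ * ε' * n}) :
    (∀ y ∈ G, ∀ y' ∈ G, Clust y = Clust y' ∨ Disjoint (Clust y) (Clust y')) ∧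
    (∀ y ∈ G, ∀ y' ∈ G, Clust y ≠ Clust y' →
      ∀ a ∈ Clust y, ∀ b ∈ Clust y', c₂ * n ≤ (hammingDist a b : ℝ)) ∧
    (∀ y ∈ G, ∀ c : Fin n → ZMod 2, HZ.mulVec c = 0 →
      Clust (y + c) = (fun u => u + c) '' Clust y ∧ (Clust (y + c) = Clust y ↔ c ∈ D)) :=
  cluster_partition_general HX HZ c₁ c₂ ε₀ hc₁ D hD hclust d hdist ε' hε' h1 h2 h3 G hG Clust hClust
end
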